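/- arXiv:math/0512467 — 2 statements merged into one kernel-verified Lean document; each statement's English description precedes it below -/
import Mathlib

section
/- Polynomiality of Kerov polynomials: let A = ℚ[R_2, R_3, R_4, …] be the polynomial ring over ℚ in countably many indeterminates, L(ζ) = ζ + Σ_{j≥2} R_j ζ^{1-j}, H the compositional inverse of L, and Σ_k := -(1/k) [z^{-1}] H(z) H(z-1) ⋯ H(z-k+1) ∈ A. Then for every integer k ≥ 1, Σ_k lies in the subring ℚ[R_2, …, R_{k+1}]; i.e. Σ_k is a polynomial with rational coefficients in the free cumulants R_2, …, R_{k+1} only. -/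
/-!
Write `S t` for the subalgebra generated by `R_2, …, R_t`, and say that a series `f` in
`w = 1/z` is filtered of shift `d` when its `w^m` coefficient lies in `S (m + d)` and vanishes
for `m < -d`. Since `S a · S b ⊆ S (max a b)` and the two vanishing conditions force both
indices of a product term below the total shift, shifts add under multiplication; `d/dz`
lowers the shift by one. `L - z` is filtered of shift `1`, and in the Taylor expansion of
`H(L(ζ)) = ζ` the `w^n` coefficient of `H` appears alone next to terms that only involve
lower coefficients of `H`; by induction `H` is filtered of shift `1`. Hence so is every
`H(z - j)`, their product over `j < k` is filtered of shift `k`, and its `z^{-1}` coefficient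
lies in `S (k + 1)`.
-/

noncomputable section

variable {A : Type*}

/-- The formal derivative `d/dz` of a formal series at infinity. A series at infinity
`f(z) = Σ_{n ≤ N} a_n z^n` is modeled as a `LaurentSeries` in the variable `w = 1/z`,
so that the coefficient of `z^n` is `f.coeff (-n)`; the derivative satisfies
`(derivZ f).coeff m = (1 - m) • f.coeff (m - 1)`. -/
noncomputable def derivZ [CommRing A] (f : LaurentSeries A) : LaurentSeries A where
  coeff m := (1 - m) • f.coeff (m - 1)
  isPWO_support' := by
    refine (f.isPWO_support.image_of_monotone (f := fun n => n + 1)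
      (fun a b hab => by simpa using hab)).mono ?_
    intro m hm
    have hf : f.coeff (m - 1) ≠ 0 := by
      intro h
      simp [Function.mem_support, h] at hm
    exact ⟨m - 1, by simpa [HahnSeries.mem_support] using hf, by ring⟩

/-- `IsSumOf g F` asserts that the formal series at infinity `g` is the coefficientwise
convergent sum `Σ_{r ≥ 0} F r`: for each coefficient, the partial sums eventually stabilize. -/
def IsSumOf [CommRing A] (g : LaurentSeries A) (F : ℕ → LaurentSeries A) : Prop :=
  ∀ m : ℤ, ∃ N : ℕ, ∀ n : ℕ, N ≤ n → g.coeff m = (∑ r ∈ Finset.range n, F r).coeff m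

/-- The free cumulant indeterminates: `Rvar j = R_j` for `j ≥ 2` in the polynomial ring
`ℚ[R_2, R_3, R_4, …]`, modeled as `MvPolynomial {n : ℕ // 2 ≤ n} ℚ`. -/
noncomputable def Rvar (j : ℕ) : MvPolynomial {n : ℕ // 2 ≤ n} ℚ :=
  if h : 2 ≤ j then MvPolynomial.X ⟨j, h⟩ else 0

open HahnSeries

theorem derivZ_coeff [CommRing A] (f : LaurentSeries A) (m : ℤ) :
    (derivZ f).coeff m = (1 - m) • f.coeff (m - 1) :=
  rfl

section Filtration

variable {R : Type*} [CommRing R] [CommRing A] [Algebra R A]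

structure IsFilteredOfShift (S : ℤ → Subalgebra R A) (d : ℤ) (f : LaurentSeries A) : Prop where
  coeff_mem (m : ℤ) : f.coeff m ∈ S (m + d)
  le_orderTop : ((-d : ℤ) : WithTop ℤ) ≤ f.orderTop

namespace IsFilteredOfShift

variable {S : ℤ → Subalgebra R A} {d d' : ℤ} {f g : LaurentSeries A}

theorem coeff_eq_zero (hf : IsFilteredOfShift S d f) {m : ℤ} (hm : m + d < 0) : f.coeff m = 0 :=
  coeff_eq_zero_of_lt_orderTop <| lt_of_lt_of_le (by exact_mod_cast (by omega : m < -d))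
    hf.le_orderTop

theorem mono (hS : Monotone S) (hf : IsFilteredOfShift S d f) (h : d ≤ d') : IsFilteredOfShift S d' f :=
  ⟨fun m => hS (by omega) (hf.coeff_mem m),
    le_trans (by exact_mod_cast neg_le_neg h) hf.le_orderTop⟩

theorem zero : IsFilteredOfShift S d (0 : LaurentSeries A) :=
  ⟨fun _ => zero_mem _, by simp⟩

theorem one : IsFilteredOfShift S 0 (1 : LaurentSeries A) where
  coeff_mem m := by
    rw [coeff_one]
    split_ifs
    exacts [one_mem _, zero_mem _]
  le_orderTop := le_orderTop_iff_forall.mpr fun j hj => by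
    rw [coeff_one, if_neg (by exact_mod_cast hj.ne)]

theorem add (hf : IsFilteredOfShift S d f) (hg : IsFilteredOfShift S d g) : IsFilteredOfShift S d (f + g) :=
  ⟨fun m => add_mem (hf.coeff_mem m) (hg.coeff_mem m),
    le_trans (le_min hf.le_orderTop hg.le_orderTop) min_orderTop_le_orderTop_add⟩

theorem sum {ι : Type*} (s : Finset ι) {F : ι → LaurentSeries A}
    (hF : ∀ i ∈ s, IsFilteredOfShift S d (F i)) : IsFilteredOfShift S d (∑ i ∈ s, F i) := by
  classical
  induction s using Finset.induction_on with
  | empty => exact zero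
  | insert i s hi ih =>
    rw [Finset.sum_insert hi]
    exact (hF i (s.mem_insert_self i)).add (ih fun j hj => hF j (Finset.mem_insert_of_mem hj))

theorem smul (hf : IsFilteredOfShift S d f) (c : R) : IsFilteredOfShift S d (c • f) :=
  ⟨fun m => by rw [HahnSeries.coeff_smul]; exact Subalgebra.smul_mem _ (hf.coeff_mem m) c,
    hf.le_orderTop.trans (orderTop_le_orderTop_smul c f)⟩

theorem mul (hS : Monotone S) {d₁ d₂ : ℤ} (hf : IsFilteredOfShift S d₁ f) (hg : IsFilteredOfShift S d₂ g) :
    IsFilteredOfShift S (d₁ + d₂) (f * g) where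
  coeff_mem p := by
    rw [coeff_mul]
    refine Subalgebra.sum_mem _ fun ij hij => ?_
    obtain ⟨hi, hj, rfl⟩ := Finset.mem_antidiagonal.mp hij
    have hi' : -d₁ ≤ ij.1 := by
      by_contra h
      exact hi (hf.coeff_eq_zero (by omega))
    have hj' : -d₂ ≤ ij.2 := by
      by_contra h
      exact hj (hg.coeff_eq_zero (by omega))
    exact mul_mem (hS (by omega) (hf.coeff_mem ij.1)) (hS (by omega) (hg.coeff_mem ij.2))
  le_orderTop := by
    refine le_trans ?_ orderTop_add_le_mul
    rw [neg_add, WithTop.coe_add]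
    exact add_le_add hf.le_orderTop hg.le_orderTop

theorem pow (hS : Monotone S) (hf : IsFilteredOfShift S d f) (n : ℕ) :
    IsFilteredOfShift S (n * d) (f ^ n) := by
  induction n with
  | zero => simpa using one
  | succ n ih => simpa [pow_succ, add_mul] using ih.mul hS hf

theorem prod (hS : Monotone S) {ι : Type*} (s : Finset ι) {F : ι → LaurentSeries A}
    {d : ι → ℤ} (hF : ∀ i ∈ s, IsFilteredOfShift S (d i) (F i)) :
    IsFilteredOfShift S (∑ i ∈ s, d i) (∏ i ∈ s, F i) := by
  classical
  induction s using Finset.induction_on with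
  | empty => simpa using one
  | insert i s hi ih =>
    rw [Finset.sum_insert hi, Finset.prod_insert hi]
    exact (hF i (s.mem_insert_self i)).mul hS
      (ih fun j hj => hF j (Finset.mem_insert_of_mem hj))

theorem derivZ (hf : IsFilteredOfShift S d f) : IsFilteredOfShift S (d - 1) (_root_.derivZ f) where
  coeff_mem m := by
    rw [derivZ_coeff]
    have h := hf.coeff_mem (m - 1)
    rw [show m - 1 + d = m + (d - 1) by ring] at h
    exact Subalgebra.zsmul_mem _ h _
  le_orderTop := le_orderTop_iff_forall.mpr fun j hj => by
    have hj : j < -(d - 1) := WithTop.coe_lt_coe.mp hj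
    rw [derivZ_coeff, hf.coeff_eq_zero (by omega), smul_zero]

theorem iterate_derivZ (hf : IsFilteredOfShift S d f) (n : ℕ) :
    IsFilteredOfShift S (d - n) (_root_.derivZ^[n] f) := by
  induction n with
  | zero => simpa using hf
  | succ n ih => simpa [Function.iterate_succ_apply', sub_sub] using ih.derivZ

theorem of_isSumOf {F : ℕ → LaurentSeries A} (hF : ∀ r, IsFilteredOfShift S d (F r))
    (hg : IsSumOf g F) : IsFilteredOfShift S d g where
  coeff_mem m := by
    obtain ⟨N, hN⟩ := hg m
    rw [hN N le_rfl]
    exact (sum _ fun r _ => hF r).coeff_mem m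
  le_orderTop := le_orderTop_iff_forall.mpr fun j hj => by
    obtain ⟨N, hN⟩ := hg j
    rw [hN N le_rfl]
    have hj : j < -d := WithTop.coe_lt_coe.mp hj
    exact (sum _ fun r _ => hF r).coeff_eq_zero (by omega)

end IsFilteredOfShift

theorem iterate_derivZ_coeff_eq_of_coeff_eq {f g : LaurentSeries A} {c : ℤ}
    (h : ∀ i < c, f.coeff i = g.coeff i) (n : ℕ) :
    ∀ i < c + n, (derivZ^[n] f).coeff i = (derivZ^[n] g).coeff i := by
  induction n with
  | zero => simpa using h
  | succ n ih =>
    intro i hi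
    rw [Function.iterate_succ_apply', Function.iterate_succ_apply', derivZ_coeff, derivZ_coeff,
      ih (i - 1) (by push_cast at hi; omega)]

theorem mul_coeff_eq_of_coeff_eq {f g g' : LaurentSeries A} {c : ℤ} (hf : 0 ≤ f.orderTop)
    (h : ∀ i < c, g.coeff i = g'.coeff i) : ∀ i < c, (f * g).coeff i = (f * g').coeff i := by
  intro i hi
  have hsub : (c : WithTop ℤ) ≤ (g - g').orderTop :=
    le_orderTop_iff_forall.mpr fun j hj => by
      rw [HahnSeries.coeff_sub, h j (by exact_mod_cast hj), sub_self]
  rw [← sub_eq_zero, ← HahnSeries.coeff_sub, ← mul_sub]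
  refine coeff_eq_zero_of_lt_orderTop (lt_of_lt_of_le ?_ orderTop_add_le_mul)
  calc (i : WithTop ℤ) < c := by exact_mod_cast hi
    _ = 0 + c := (zero_add _).symm
    _ ≤ f.orderTop + (g - g').orderTop := add_le_add hf hsub

end Filtration

section Inverse

variable [CommRing A] [Algebra ℚ A] {S : ℤ → Subalgebra ℚ A} {H P : LaurentSeries A}

theorem coeff_mem_of_isSumOf_comp (hS : Monotone S) (hP : IsFilteredOfShift S 1 P)
    (hP0 : 0 ≤ P.orderTop) (hH : ((-1 : ℤ) : WithTop ℤ) ≤ H.orderTop)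
    (hcomp : IsSumOf (single (-1) 1)
      fun s => ((Nat.factorial s : ℚ))⁻¹ • (P ^ s * derivZ^[s] H))
    {n : ℤ} (hlow : ∀ i < n, H.coeff i ∈ S (i + 1)) : H.coeff n ∈ S (n + 1) := by
  have hHt : IsFilteredOfShift S 1 (truncLT n H) := by
    refine ⟨fun i => ?_, le_orderTop_iff_forall.mpr fun j hj => ?_⟩ <;>
      rw [HahnSeries.coeff_truncLT] <;> split_ifs with h
    exacts [hlow i h, zero_mem _, coeff_eq_zero_of_lt_orderTop (hj.trans_le hH), rfl]
  -- For `s ≥ 1` the `w^n` coefficient of `P^s · D^s H` only sees coefficients of `H` below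
  -- `n`, because `P` has no positive powers of `z`; so `H` may be replaced by its truncation.
  have hterm (s : ℕ) : (P ^ (s + 1) * derivZ^[s + 1] H).coeff n ∈ S (n + 1) := by
    have hPs : 0 ≤ (P ^ (s + 1)).orderTop :=
      (nsmul_nonneg hP0 _).trans orderTop_nsmul_le_orderTop_pow
    rw [mul_coeff_eq_of_coeff_eq hPs (iterate_derivZ_coeff_eq_of_coeff_eq (c := n)
      (fun i hi => (coeff_truncLT_of_lt hi H).symm) (s + 1)) n (by omega)]
    have h := ((hP.pow hS (s + 1)).mul hS (hHt.iterate_derivZ (s + 1))).coeff_mem n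
    rwa [show n + ((s + 1 : ℕ) * 1 + (1 - (s + 1 : ℕ))) = n + 1 by ring] at h
  obtain ⟨N, hN⟩ := hcomp n
  have hsum := hN (N + 1) (by omega)
  rw [coeff_sum, Finset.sum_range_succ'] at hsum
  simp only [Nat.factorial_zero, Nat.cast_one, inv_one, one_smul, pow_zero, one_mul,
    Function.iterate_zero, id_eq] at hsum
  rw [eq_sub_of_add_eq' hsum.symm]
  refine sub_mem ?_ (Subalgebra.sum_mem _ fun s _ => ?_)
  · rw [coeff_single]
    split_ifs
    exacts [one_mem _, zero_mem _]
  · rw [HahnSeries.coeff_smul]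
    exact Subalgebra.smul_mem _ (hterm s) _

theorem isFilteredOfShift_of_isSumOf_comp (hS : Monotone S) (hP : IsFilteredOfShift S 1 P)
    (hP0 : 0 ≤ P.orderTop) (hH : ((-1 : ℤ) : WithTop ℤ) ≤ H.orderTop)
    (hcomp : IsSumOf (single (-1) 1)
      fun s => ((Nat.factorial s : ℚ))⁻¹ • (P ^ s * derivZ^[s] H)) :
    IsFilteredOfShift S 1 H := by
  refine ⟨fun n => ?_, hH⟩
  induction hk : (n + 2).toNat using Nat.strong_induction_on generalizing n with
  | _ k ih =>
  rcases lt_or_ge n (-1) with hn | hn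
  · rw [coeff_eq_zero_of_lt_orderTop (lt_of_lt_of_le (by exact_mod_cast hn) hH)]
    exact zero_mem _
  exact coeff_mem_of_isSumOf_comp hS hP hP0 hH hcomp fun i hi => ih _ (by omega) i rfl

end Inverse

section FreeCumulants

def cumulantAlg (t : ℤ) : Subalgebra ℚ (MvPolynomial {n : ℕ // 2 ≤ n} ℚ) :=
  Algebra.adjoin ℚ (Rvar '' {j : ℕ | 2 ≤ j ∧ (j : ℤ) ≤ t})

theorem monotone_cumulantAlg : Monotone cumulantAlg := fun _ _ h =>
  Algebra.adjoin_mono (Set.image_mono fun _ hj => ⟨hj.1, hj.2.trans h⟩)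

theorem cumulantAlg_natCast (n : ℕ) :
    cumulantAlg n = Algebra.adjoin ℚ (Rvar '' {j : ℕ | 2 ≤ j ∧ j ≤ n}) := by
  simp only [cumulantAlg, Nat.cast_le]

variable {B : ℕ → MvPolynomial {n : ℕ // 2 ≤ n} ℚ}
  {H L : LaurentSeries (MvPolynomial {n : ℕ // 2 ≤ n} ℚ)}

theorem coeff_sub_single_of_coeff (hL : ∀ m : ℤ, L.coeff m =
      if m = -1 then 1 else if 1 ≤ m then Rvar (m + 1).toNat else 0) (m : ℤ) :
    (L - single (-1) 1).coeff m = if 1 ≤ m then Rvar (m + 1).toNat else 0 := by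
  rw [HahnSeries.coeff_sub, hL, coeff_single]
  by_cases hm : m = -1
  · simp [hm]
  · rw [if_neg hm, if_neg hm, sub_zero]

theorem isFilteredOfShift_sub_single_of_coeff (hL : ∀ m : ℤ, L.coeff m =
      if m = -1 then 1 else if 1 ≤ m then Rvar (m + 1).toNat else 0) :
    IsFilteredOfShift cumulantAlg 1 (L - single (-1) 1) where
  coeff_mem m := by
    rw [coeff_sub_single_of_coeff hL]
    split_ifs
    exacts [Algebra.subset_adjoin ⟨_, ⟨by omega, by omega⟩, rfl⟩, zero_mem _]
  le_orderTop := le_orderTop_iff_forall.mpr fun j hj => by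
    have hj : j < -1 := WithTop.coe_lt_coe.mp hj
    rw [coeff_sub_single_of_coeff hL, if_neg (by omega)]

theorem zero_le_orderTop_sub_single_of_coeff (hL : ∀ m : ℤ, L.coeff m =
      if m = -1 then 1 else if 1 ≤ m then Rvar (m + 1).toNat else 0) :
    0 ≤ (L - single (-1) 1).orderTop :=
  le_orderTop_iff_forall.mpr fun j hj => by
    have hj : j < 0 := WithTop.coe_lt_coe.mp hj
    rw [coeff_sub_single_of_coeff hL, if_neg (by omega)]

theorem neg_one_le_orderTop_of_coeff (hH : ∀ m : ℤ, H.coeff m =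
      if m = -1 then 1 else if 1 ≤ m then -B (m + 1).toNat else 0) :
    ((-1 : ℤ) : WithTop ℤ) ≤ H.orderTop :=
  le_orderTop_iff_forall.mpr fun j hj => by
    have hj : j < -1 := WithTop.coe_lt_coe.mp hj
    rw [hH, if_neg (by omega), if_neg (by omega)]

end FreeCumulants

theorem kerov_polynomiality_general
    (B : ℕ → MvPolynomial {n : ℕ // 2 ≤ n} ℚ)
    (H L : LaurentSeries (MvPolynomial {n : ℕ // 2 ≤ n} ℚ))
    (Hshift : ℕ → LaurentSeries (MvPolynomial {n : ℕ // 2 ≤ n} ℚ))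
    (hH : ∀ m : ℤ, H.coeff m =
      if m = -1 then 1 else if 1 ≤ m then -B (m + 1).toNat else 0)
    (hL : ∀ m : ℤ, L.coeff m =
      if m = -1 then 1 else if 1 ≤ m then Rvar (m + 1).toNat else 0)
    (hcomp : IsSumOf (HahnSeries.single (-1) 1)
      (fun s => ((Nat.factorial s : ℚ))⁻¹ •
        ((L - HahnSeries.single (-1) 1) ^ s * derivZ^[s] H)))
    (hHshift : ∀ j : ℕ, IsSumOf (Hshift j)
      (fun r => ((-(j : ℚ)) ^ r / (Nat.factorial r : ℚ)) • derivZ^[r] H))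
    (k : ℕ) :
    -((k : ℚ))⁻¹ • (∏ j ∈ Finset.range k, Hshift j).coeff 1 ∈
      Algebra.adjoin ℚ (Rvar '' {j : ℕ | 2 ≤ j ∧ j ≤ k + 1}) := by
  have hS := monotone_cumulantAlg
  have hHf : IsFilteredOfShift cumulantAlg 1 H :=
    isFilteredOfShift_of_isSumOf_comp hS (isFilteredOfShift_sub_single_of_coeff hL)
      (zero_le_orderTop_sub_single_of_coeff hL) (neg_one_le_orderTop_of_coeff hH) hcomp
  have hshift (j : ℕ) : IsFilteredOfShift cumulantAlg 1 (Hshift j) :=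
    .of_isSumOf (fun r => ((hHf.iterate_derivZ r).mono hS (by omega)).smul _) (hHshift j)
  have hprod := (IsFilteredOfShift.prod hS (Finset.range k) fun j _ => hshift j).coeff_mem 1
  rw [← cumulantAlg_natCast]
  refine Subalgebra.smul_mem _ ?_ _
  simpa [add_comm] using hprod

/-- Polynomiality of Kerov polynomials: over the polynomial ring
`A = ℚ[R_2, R_3, …]`, with `L(ζ) = ζ + Σ_{j≥2} R_j ζ^{1-j}`, `H` the compositional
inverse of `L`, and `Σ_k = -(1/k)[z^{-1}] H(z) H(z-1) ⋯ H(z-k+1)` (where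
`H(z-j) = Σ_{r≥0} ((-j)^r/r!) H^{(r)}(z)`), the element `Σ_k` lies in the `ℚ`-subalgebra
generated by `R_2, …, R_{k+1}`, for every `k ≥ 1`. -/
theorem kerov_polynomiality
    (B : ℕ → MvPolynomial {n : ℕ // 2 ≤ n} ℚ)
    (H L : LaurentSeries (MvPolynomial {n : ℕ // 2 ≤ n} ℚ))
    (Hshift : ℕ → LaurentSeries (MvPolynomial {n : ℕ // 2 ≤ n} ℚ))
    (hH : ∀ m : ℤ, H.coeff m =
      if m = -1 then 1 else if 1 ≤ m then -B (m + 1).toNat else 0)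
    (hL : ∀ m : ℤ, L.coeff m =
      if m = -1 then 1 else if 1 ≤ m then Rvar (m + 1).toNat else 0)
    (hcomp : IsSumOf (HahnSeries.single (-1) 1)
      (fun s => ((Nat.factorial s : ℚ))⁻¹ •
        ((L - HahnSeries.single (-1) 1) ^ s * derivZ^[s] H)))
    (hHshift : ∀ j : ℕ, IsSumOf (Hshift j)
      (fun r => ((-(j : ℚ)) ^ r / (Nat.factorial r : ℚ)) • derivZ^[r] H))
    (k : ℕ) (hk : 1 ≤ k) :
    -((k : ℚ))⁻¹ • (∏ j ∈ Finset.range k, Hshift j).coeff 1 ∈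
      Algebra.adjoin ℚ (Rvar '' {j : ℕ | 2 ≤ j ∧ j ≤ k + 1}) :=
  kerov_polynomiality_general B H L Hshift hH hL hcomp hHshift k
end
end

section
/- Kerov polynomial for k = 4: let A be a commutative ℚ-algebra, R_2, R_3, … ∈ A, L(ζ) = ζ + Σ_{j≥2} R_j ζ^{1-j}, H the compositional inverse of L, and Σ_k := -(1/k) [z^{-1}] H(z) H(z-1) ⋯ H(z-k+1). Then Σ_4 = R_5 + 5 R_3. -/
noncomputable section

variable {A : Type*}

/-!
Write `h n` for the coefficient of `z⁻ⁿ` in `H`, so `h (-1) = 1` and `h 0 = 0`, and put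
`L = z + E`. In the coefficients of `z⁻¹`, `z⁻²` and `z⁻⁴` of `H (z + E) = z` only the first two
Taylor terms contribute, which gives `h 1 = -R₂`, `h 2 = -R₃` and `h 4 = -R₅ - 3 R₂ R₃`. The
coefficients of `H (z - j)` are binomial in `j`, and `[z⁻¹]` of the four-fold product only involves
the coefficients of `z¹, …, z⁻⁴` of each factor; it equals `12 h 1 h 2 + 20 h 2 + 4 h 4` (`h 3`
cancels), hence `-4 (R₅ + 5 R₃)`.

Coefficients of products are computed by writing a Laurent series that vanishes below `a` as
`single a 1` times a power series.
-/

open HahnSeries Finset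
open scoped Nat

namespace LaurentSeries

variable [CommRing A]

def powerSeriesFrom (a : ℤ) (f : LaurentSeries A) : PowerSeries A :=
  PowerSeries.mk fun n => f.coeff (a + n)

@[simp]
theorem coeff_powerSeriesFrom (a : ℤ) (f : LaurentSeries A) (n : ℕ) :
    PowerSeries.coeff n (powerSeriesFrom a f) = f.coeff (a + n) :=
  PowerSeries.coeff_mk _ _

theorem single_mul_ofPowerSeries_powerSeriesFrom {a : ℤ} {f : LaurentSeries A}
    (hf : (a : WithTop ℤ) ≤ f.orderTop) :
    single a 1 * ofPowerSeries ℤ A (powerSeriesFrom a f) = f := by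
  ext m
  rw [coeff_single_mul, one_mul, PowerSeries.coeff_coe]
  split_ifs with hm
  · exact (le_orderTop_iff_forall.mp hf m (by exact_mod_cast (sub_neg.mp hm))).symm
  · rw [coeff_powerSeriesFrom, Int.natCast_natAbs, abs_of_nonneg (not_lt.mp hm),
      add_sub_cancel]

theorem powerSeriesFrom_single_mul_ofPowerSeries (a : ℤ) (p : PowerSeries A) :
    powerSeriesFrom a (single a 1 * ofPowerSeries ℤ A p) = p := by
  ext n
  rw [coeff_powerSeriesFrom, add_comm, coeff_single_mul_add, one_mul, ofPowerSeries_apply_coeff]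

theorem powerSeriesFrom_mul {a b : ℤ} {f g : LaurentSeries A}
    (hf : (a : WithTop ℤ) ≤ f.orderTop) (hg : (b : WithTop ℤ) ≤ g.orderTop) :
    powerSeriesFrom (a + b) (f * g) = powerSeriesFrom a f * powerSeriesFrom b g := by
  have hfg : f * g = single (a + b) 1 *
      ofPowerSeries ℤ A (powerSeriesFrom a f * powerSeriesFrom b g) := by
    conv_lhs => rw [← single_mul_ofPowerSeries_powerSeriesFrom hf,
      ← single_mul_ofPowerSeries_powerSeriesFrom hg]
    rw [map_mul, mul_mul_mul_comm, single_mul_single, mul_one]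
  rw [hfg, powerSeriesFrom_single_mul_ofPowerSeries]

theorem coeff_mul_add_add {a b : ℤ} {f g : LaurentSeries A}
    (hf : (a : WithTop ℤ) ≤ f.orderTop) (hg : (b : WithTop ℤ) ≤ g.orderTop) (n : ℕ) :
    (f * g).coeff (a + b + n) =
      ∑ p ∈ antidiagonal n, f.coeff (a + p.1) * g.coeff (b + p.2) := by
  rw [← coeff_powerSeriesFrom, powerSeriesFrom_mul hf hg, PowerSeries.coeff_mul]
  simp only [coeff_powerSeriesFrom]

theorem le_orderTop_prod {ι : Type*} {s : Finset ι} {a : ι → ℤ} {f : ι → LaurentSeries A}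
    (hf : ∀ i ∈ s, (a i : WithTop ℤ) ≤ (f i).orderTop) :
    ((∑ i ∈ s, a i : ℤ) : WithTop ℤ) ≤ (∏ i ∈ s, f i).orderTop := by
  classical
  induction s using Finset.induction_on with
  | empty =>
    exact le_orderTop_iff_forall.mpr fun m hm => by
      rw [prod_empty, HahnSeries.coeff_one, if_neg (by rintro rfl; simp at hm)]
  | insert i s hi ih =>
    rw [sum_insert hi, prod_insert hi, WithTop.coe_add]
    exact (add_le_add (hf i (mem_insert_self i s))
      (ih fun k hk => hf k (mem_insert_of_mem hk))).trans orderTop_add_le_mul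

theorem powerSeriesFrom_prod {ι : Type*} {s : Finset ι} {a : ι → ℤ} {f : ι → LaurentSeries A}
    (hf : ∀ i ∈ s, (a i : WithTop ℤ) ≤ (f i).orderTop) :
    powerSeriesFrom (∑ i ∈ s, a i) (∏ i ∈ s, f i) = ∏ i ∈ s, powerSeriesFrom (a i) (f i) := by
  classical
  induction s using Finset.induction_on with
  | empty => ext n; simp [PowerSeries.coeff_one, HahnSeries.coeff_one]
  | insert i s hi ih =>
    have hs : ∀ k ∈ s, (a k : WithTop ℤ) ≤ (f k).orderTop :=
      fun k hk => hf k (mem_insert_of_mem hk)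
    rw [sum_insert hi, prod_insert hi, prod_insert hi,
      powerSeriesFrom_mul (hf i (mem_insert_self i s)) (le_orderTop_prod hs), ih hs]

theorem coeff_prod_of_le_orderTop {ι : Type*} {s : Finset ι} {a : ι → ℤ}
    {f : ι → LaurentSeries A} (hf : ∀ i ∈ s, (a i : WithTop ℤ) ≤ (f i).orderTop) (n : ℕ) :
    (∏ i ∈ s, f i).coeff (∑ i ∈ s, a i + n) =
      PowerSeries.coeff n (∏ i ∈ s, powerSeriesFrom (a i) (f i)) := by
  rw [← powerSeriesFrom_prod hf, coeff_powerSeriesFrom]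

end LaurentSeries

open LaurentSeries

section Derivative

variable [CommRing A]

theorem coeff_derivZ (f : LaurentSeries A) (m : ℤ) :
    (derivZ f).coeff m = (1 - m) • f.coeff (m - 1) :=
  rfl

theorem coeff_derivZ_iterate (f : LaurentSeries A) (r : ℕ) (m : ℤ) :
    (derivZ^[r] f).coeff m = (∏ k ∈ range r, (1 - m + k)) • f.coeff (m - r) := by
  induction r generalizing m with
  | zero => simp
  | succ r ih =>
    rw [Function.iterate_succ_apply', coeff_derivZ, ih, smul_smul, prod_range_succ']
    congr 1
    · rw [mul_comm]
      push_cast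
      ring_nf
    · push_cast
      ring_nf

theorem le_orderTop_derivZ_iterate {a : ℤ} {f : LaurentSeries A}
    (hf : (a : WithTop ℤ) ≤ f.orderTop) (r : ℕ) :
    ((a + r : ℤ) : WithTop ℤ) ≤ (derivZ^[r] f).orderTop := by
  refine le_orderTop_iff_forall.mpr fun m hm => ?_
  rw [coeff_derivZ_iterate, le_orderTop_iff_forall.mp hf (m - r) ?_, smul_zero]
  have : m < a + r := by exact_mod_cast hm
  exact_mod_cast (by omega : m - r < a)

end Derivative

theorem IsSumOf.coeff_eq_sum_range [CommRing A] {g : LaurentSeries A}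
    {F : ℕ → LaurentSeries A} (h : IsSumOf g F) {m : ℤ} {n : ℕ}
    (hF : ∀ r, n ≤ r → (F r).coeff m = 0) :
    g.coeff m = ∑ r ∈ range n, (F r).coeff m := by
  obtain ⟨N, hN⟩ := h m
  rw [hN (max N n) (le_max_left N n), coeff_sum, ← sum_range_add_sum_Ico _ (le_max_right N n),
    sum_eq_zero fun r hr => hF r (mem_Ico.mp hr).1, add_zero]

section TaylorShift

variable [CommRing A] [Algebra ℚ A]

/-- `G = H (z + t)`, with the shift expanded as a Taylor series. -/
def IsTaylorShift (G H : LaurentSeries A) (t : ℚ) : Prop :=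
  IsSumOf G fun r => (t ^ r / r ! : ℚ) • derivZ^[r] H

variable {G H : LaurentSeries A} {t : ℚ}

theorem IsTaylorShift.coeff_eq_sum (hG : IsTaylorShift G H t) {m : ℤ} {n : ℕ}
    (hn : ∀ r, n ≤ r → (∏ k ∈ range r, (1 - m + k)) • H.coeff (m - r) = 0) :
    G.coeff m = ∑ r ∈ range n,
      (t ^ r / r ! : ℚ) • (∏ k ∈ range r, (1 - m + k)) • H.coeff (m - r) := by
  refine (hG.coeff_eq_sum_range fun r hr => ?_).trans (sum_congr rfl fun r _ => ?_)
  · rw [HahnSeries.coeff_smul, coeff_derivZ_iterate, hn r hr, smul_zero]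
  · rw [HahnSeries.coeff_smul, coeff_derivZ_iterate]

theorem IsTaylorShift.coeff_eq_sum_of_pos (hG : IsTaylorShift G H t) {m : ℤ} {n : ℕ}
    (hm : 0 < m) (hn : m ≤ n) :
    G.coeff m = ∑ r ∈ range n,
      (t ^ r / r ! : ℚ) • (∏ k ∈ range r, (1 - m + k)) • H.coeff (m - r) := by
  refine hG.coeff_eq_sum fun r hr => ?_
  rw [prod_eq_zero (i := (m - 1).toNat) (mem_range.mpr (by omega)) (by omega), zero_smul]

theorem IsTaylorShift.coeff_eq_sum_of_le_orderTop (hG : IsTaylorShift G H t) {a m : ℤ} {n : ℕ}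
    (hH : (a : WithTop ℤ) ≤ H.orderTop) (hn : m - a < n) :
    G.coeff m = ∑ r ∈ range n,
      (t ^ r / r ! : ℚ) • (∏ k ∈ range r, (1 - m + k)) • H.coeff (m - r) := by
  refine hG.coeff_eq_sum fun r hr => ?_
  rw [le_orderTop_iff_forall.mp hH _ (by exact_mod_cast (by omega : m - r < a)), smul_zero]

theorem IsTaylorShift.le_orderTop (hG : IsTaylorShift G H t) {a : ℤ}
    (hH : (a : WithTop ℤ) ≤ H.orderTop) : (a : WithTop ℤ) ≤ G.orderTop := by
  refine le_orderTop_iff_forall.mpr fun m hm => ?_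
  have hma : m < a := by exact_mod_cast hm
  exact hG.coeff_eq_sum_of_le_orderTop hH (n := 0) (by omega)

theorem IsTaylorShift.coeff_neg_one (hG : IsTaylorShift G H t)
    (hH : ((-1 : ℤ) : WithTop ℤ) ≤ H.orderTop) : G.coeff (-1) = H.coeff (-1) := by
  rw [hG.coeff_eq_sum_of_le_orderTop hH (n := 1) (by norm_num)]
  simp

theorem IsTaylorShift.coeff_zero (hG : IsTaylorShift G H t)
    (hH : ((-1 : ℤ) : WithTop ℤ) ≤ H.orderTop) : G.coeff 0 = H.coeff 0 + t • H.coeff (-1) := by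
  rw [hG.coeff_eq_sum_of_le_orderTop hH (n := 2) (by norm_num)]
  simp [sum_range_succ]

theorem IsTaylorShift.coeff_one (hG : IsTaylorShift G H t) : G.coeff 1 = H.coeff 1 := by
  rw [hG.coeff_eq_sum_of_pos (n := 1) (by norm_num) (by norm_num)]
  simp

theorem IsTaylorShift.coeff_two (hG : IsTaylorShift G H t) :
    G.coeff 2 = H.coeff 2 - t • H.coeff 1 := by
  rw [hG.coeff_eq_sum_of_pos (n := 2) (by norm_num) (by norm_num)]
  simp [sum_range_succ, ← Int.cast_smul_eq_zsmul ℚ, smul_smul]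
  module

theorem IsTaylorShift.coeff_three (hG : IsTaylorShift G H t) :
    G.coeff 3 = H.coeff 3 - (2 * t) • H.coeff 2 + t ^ 2 • H.coeff 1 := by
  rw [hG.coeff_eq_sum_of_pos (n := 3) (by norm_num) (by norm_num)]
  simp [sum_range_succ, prod_range_succ, Nat.factorial, ← Int.cast_smul_eq_zsmul ℚ, smul_smul]
  module

theorem IsTaylorShift.coeff_four (hG : IsTaylorShift G H t) :
    G.coeff 4 = H.coeff 4 - (3 * t) • H.coeff 3 + (3 * t ^ 2) • H.coeff 2 - t ^ 3 • H.coeff 1 := by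
  rw [hG.coeff_eq_sum_of_pos (n := 4) (by norm_num) (by norm_num)]
  simp [sum_range_succ, prod_range_succ, Nat.factorial, ← Int.cast_smul_eq_zsmul ℚ, smul_smul]
  module

end TaylorShift

section CompositionalInverse

variable [CommRing A] {H E : LaurentSeries A}

theorem le_orderTop_pow_mul_derivZ_iterate (hH : ((-1 : ℤ) : WithTop ℤ) ≤ H.orderTop)
    (hE : (1 : WithTop ℤ) ≤ E.orderTop) (s : ℕ) :
    ((2 * s - 1 : ℤ) : WithTop ℤ) ≤ (E ^ s * derivZ^[s] H).orderTop := by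
  have hEs : ((s : ℤ) : WithTop ℤ) ≤ (E ^ s).orderTop := by
    simpa using (nsmul_le_nsmul_right hE s).trans orderTop_nsmul_le_orderTop_pow
  refine le_trans ?_ ((add_le_add hEs (le_orderTop_derivZ_iterate hH s)).trans orderTop_add_le_mul)
  rw [← WithTop.coe_add]
  exact WithTop.coe_le_coe.mpr (by omega)

variable [Algebra ℚ A]

/-- `H (z + E) = z`, where `z` is `single (-1) 1` and `H (z + E)` is expanded as the Taylor series
`∑ₛ Eˢ H⁽ˢ⁾ / s!`. -/
def IsCompInverse (H E : LaurentSeries A) : Prop :=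
  IsSumOf (single (-1) 1) fun s => (s ! : ℚ)⁻¹ • (E ^ s * derivZ^[s] H)

namespace IsCompInverse

theorem sum_coeff_eq (hHE : IsCompInverse H E) (hH : ((-1 : ℤ) : WithTop ℤ) ≤ H.orderTop)
    (hE : (1 : WithTop ℤ) ≤ E.orderTop) {m : ℤ} {n : ℕ} (hmn : m < 2 * n - 1) :
    ∑ s ∈ range n, (s ! : ℚ)⁻¹ • (E ^ s * derivZ^[s] H).coeff m =
      (single (-1) (1 : A)).coeff m := by
  rw [hHE.coeff_eq_sum_range (n := n) fun s hs => ?_]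
  · simp only [HahnSeries.coeff_smul]
  · rw [HahnSeries.coeff_smul, le_orderTop_iff_forall.mp
      (le_orderTop_pow_mul_derivZ_iterate hH hE s) m
      (by exact_mod_cast (by omega : m < 2 * s - 1)), smul_zero]

theorem coeff_neg_one (hHE : IsCompInverse H E) (hH : ((-1 : ℤ) : WithTop ℤ) ≤ H.orderTop)
    (hE : (1 : WithTop ℤ) ≤ E.orderTop) : H.coeff (-1) = 1 := by
  simpa using hHE.sum_coeff_eq hH hE (m := -1) (n := 1) (by norm_num)

theorem coeff_one (hHE : IsCompInverse H E) (hH : ((-1 : ℤ) : WithTop ℤ) ≤ H.orderTop)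
    (hE : (1 : WithTop ℤ) ≤ E.orderTop) : H.coeff 1 = -E.coeff 1 := by
  have h := hHE.sum_coeff_eq hH hE (m := 1) (n := 2) (by norm_num)
  have hED := coeff_mul_add_add hE (le_orderTop_derivZ_iterate hH 1) 0
  simp only [Finset.Nat.sum_antidiagonal_eq_sum_range_succ_mk, sum_range_succ, sum_range_zero,
    coeff_derivZ_iterate, prod_range_succ, prod_range_zero] at hED
  norm_num at hED
  norm_num [sum_range_succ, hED, hHE.coeff_neg_one hH hE] at h
  linear_combination h

theorem coeff_two (hHE : IsCompInverse H E) (hH : ((-1 : ℤ) : WithTop ℤ) ≤ H.orderTop)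
    (hE : (1 : WithTop ℤ) ≤ E.orderTop) : H.coeff 2 = -E.coeff 2 := by
  have h := hHE.sum_coeff_eq hH hE (m := 2) (n := 2) (by norm_num)
  have hED := coeff_mul_add_add hE (le_orderTop_derivZ_iterate hH 1) 1
  simp only [Finset.Nat.sum_antidiagonal_eq_sum_range_succ_mk, sum_range_succ, sum_range_zero,
    coeff_derivZ_iterate, prod_range_succ, prod_range_zero] at hED
  norm_num at hED
  norm_num [sum_range_succ, hED, hHE.coeff_neg_one hH hE] at h
  linear_combination h

theorem coeff_four (hHE : IsCompInverse H E) (hH : ((-1 : ℤ) : WithTop ℤ) ≤ H.orderTop)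
    (hE : (1 : WithTop ℤ) ≤ E.orderTop) :
    H.coeff 4 = -E.coeff 4 - 3 * E.coeff 1 * E.coeff 2 := by
  have h := hHE.sum_coeff_eq hH hE (m := 4) (n := 3) (by norm_num)
  have hED := coeff_mul_add_add hE (le_orderTop_derivZ_iterate hH 1) 3
  have hE2 : ((2 : ℤ) : WithTop ℤ) ≤ (E ^ 2).orderTop := by
    simpa using (nsmul_le_nsmul_right hE 2).trans orderTop_nsmul_le_orderTop_pow
  have hED2 := coeff_mul_add_add hE2 (le_orderTop_derivZ_iterate hH 2) 1
  simp only [Finset.Nat.sum_antidiagonal_eq_sum_range_succ_mk, sum_range_succ, sum_range_zero,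
    coeff_derivZ_iterate, prod_range_succ, prod_range_zero] at hED hED2
  norm_num at hED hED2
  norm_num [sum_range_succ, Nat.factorial, hED, hED2, hHE.coeff_neg_one hH hE,
    hHE.coeff_one hH hE, hHE.coeff_two hH hE] at h
  linear_combination h

end IsCompInverse

end CompositionalInverse

theorem coeff_one_prod_range_four_of_isTaylorShift [CommRing A] [Algebra ℚ A]
    {H : LaurentSeries A} {G : ℕ → LaurentSeries A}
    (hH : ((-1 : ℤ) : WithTop ℤ) ≤ H.orderTop) (hH_neg_one : H.coeff (-1) = 1)
    (hH_zero : H.coeff 0 = 0)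
    (hG : ∀ j : ℕ, IsTaylorShift (G j) H (-j)) :
    (∏ j ∈ range 4, G j).coeff 1 = 12 * H.coeff 1 * H.coeff 2 + 20 * H.coeff 2 + 4 * H.coeff 4 := by
  rw [show (1 : ℤ) = ∑ _j ∈ range 4, (-1 : ℤ) + (5 : ℕ) by simp,
    coeff_prod_of_le_orderTop fun j _ => (hG j).le_orderTop hH]
  simp only [prod_range_succ, prod_range_zero, one_mul, PowerSeries.coeff_mul,
    Finset.Nat.sum_antidiagonal_eq_sum_range_succ_mk, sum_range_succ, sum_range_zero,
    coeff_powerSeriesFrom]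
  norm_num [(hG _).coeff_neg_one hH, (hG _).coeff_zero hH, (hG _).coeff_one, (hG _).coeff_two,
    (hG _).coeff_three, (hG _).coeff_four, hH_neg_one, hH_zero, Algebra.smul_def, map_ofNat]
  ring

/-- Kerov polynomial for `k = 4`: over a commutative `ℚ`-algebra `A`
with `R_2, R_3, … ∈ A`, `L(ζ) = ζ + Σ_{j≥2} R_j ζ^{1-j}`, `H` the compositional
inverse of `L` (so `H(L(ζ)) = ζ`), and
`Σ_k = -(1/k)[z^{-1}] H(z) H(z-1) ⋯ H(z-k+1)` where
`H(z-j) = Σ_{r≥0} ((-j)^r/r!) H^{(r)}(z)`, one has `Σ_4 = R_5 + 5 R_3` (in informal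
notation). -/
theorem kerov_polynomial_four [CommRing A] [Algebra ℚ A]
    (B R : ℕ → A) (H L : LaurentSeries A) (Hshift : ℕ → LaurentSeries A)
    (hH : ∀ m : ℤ, H.coeff m =
      if m = -1 then 1 else if 1 ≤ m then -B (m + 1).toNat else 0)
    (hL : ∀ m : ℤ, L.coeff m =
      if m = -1 then 1 else if 1 ≤ m then R (m + 1).toNat else 0)
    (hcomp : IsSumOf (HahnSeries.single (-1) 1)
      (fun s => ((Nat.factorial s : ℚ))⁻¹ •
        ((L - HahnSeries.single (-1) 1) ^ s * derivZ^[s] H)))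
    (hHshift : ∀ j : ℕ, IsSumOf (Hshift j)
      (fun r => ((-(j : ℚ)) ^ r / (Nat.factorial r : ℚ)) • derivZ^[r] H)) :
    -((4 : ℚ))⁻¹ • (∏ j ∈ Finset.range 4, Hshift j).coeff 1 = R 5 + 5 * R 3 := by
  set E := L - single (-1) 1
  have hHord : ((-1 : ℤ) : WithTop ℤ) ≤ H.orderTop :=
    le_orderTop_iff_forall.mpr fun m hm => by
      have : m < -1 := by exact_mod_cast hm
      rw [hH, if_neg (by omega), if_neg (by omega)]
  have hEcoeff (m : ℤ) : E.coeff m = if 1 ≤ m then R (m + 1).toNat else 0 := by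
    rw [HahnSeries.coeff_sub, hL, HahnSeries.coeff_single]
    split_ifs <;> first | omega | simp
  have hEord : (1 : WithTop ℤ) ≤ E.orderTop :=
    le_orderTop_iff_forall.mpr fun m hm => by
      have : m < 1 := by exact_mod_cast hm
      rw [hEcoeff, if_neg (by omega)]
  have hE₁ : E.coeff 1 = R 2 := by rw [hEcoeff]; rfl
  have hE₂ : E.coeff 2 = R 3 := by rw [hEcoeff]; rfl
  have hE₄ : E.coeff 4 = R 5 := by rw [hEcoeff]; rfl
  have hH_neg_one : H.coeff (-1) = 1 := by rw [hH]; norm_num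
  have hH_zero : H.coeff 0 = 0 := by rw [hH]; norm_num
  rw [coeff_one_prod_range_four_of_isTaylorShift hHord hH_neg_one hH_zero hHshift,
    IsCompInverse.coeff_one hcomp hHord hEord, IsCompInverse.coeff_two hcomp hHord hEord,
    IsCompInverse.coeff_four hcomp hHord hEord, hE₁, hE₂, hE₄]
  have hsum : 12 * -R 2 * -R 3 + 20 * -R 3 + 4 * (-R 5 - 3 * R 2 * R 3) =
      (-4 : ℚ) • (R 5 + 5 * R 3) := by
    rw [Algebra.smul_def, map_neg, map_ofNat]
    ring
  rw [hsum, smul_smul]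
  norm_num
end
end
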